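/- For a basic CFSM M, the translation round-trip preserves trace semantics: M is trace equivalent to the CFSM obtained from its induced local type, i.e., M ≈ A(T(M)); and for any local type T, T ≈ A(T). -/

import Mathlib

/-- Actions: `send p q a` = pq!a, `recv p q a` = pq?a. -/
inductive Act (P A : Type) : Type
  | send (p q : P) (a : A)
  | recv (p q : P) (a : A)

namespace Act
variable {P A : Type}
def subj : Act P A → P
  | send p _ _ => p
  | recv _ q _ => q
def partner : Act P A → P
  | send _ q _ => q
  | recv p _ _ => p
def isSend : Act P A → Bool
  | send _ _ _ => true
  | recv _ _ _ => false
def msg : Act P A → A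
  | send _ _ a => a
  | recv _ _ a => a
end Act

/-- Local session types with named recursion variables. -/
inductive LTn (P A : Type) : Type
  | ende : LTn P A
  | var (x : ℕ) : LTn P A
  | mu (x : ℕ) (T : LTn P A) : LTn P A
  | recvT (p : P) (bs : List (A × LTn P A)) : LTn P A
  | sendT (p : P) (bs : List (A × LTn P A)) : LTn P A

namespace LTn
variable {P A : Type}
mutual
  def subst (x : ℕ) (u : LTn P A) : LTn P A → LTn P A
    | .ende => .ende
    | .var y => if y = x then u else .var y
    | .mu y T => if y = x then .mu y T else .mu y (subst x u T)
    | .recvT p bs => .recvT p (substL x u bs)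
    | .sendT p bs => .sendT p (substL x u bs)
  def substL (x : ℕ) (u : LTn P A) :
      List (A × LTn P A) → List (A × LTn P A)
    | [] => []
    | (a, T) :: bs => (a, subst x u T) :: substL x u bs
end
end LTn

/-- LTS over local types of role `self` (LR1-LR3). -/
inductive LStep {P A : Type} (self : P) : LTn P A → Act P A → LTn P A → Prop
  | sel {p a T bs} : (a, T) ∈ bs →
      LStep self (.sendT p bs) (.send self p a) T
  | bra {p a T bs} : (a, T) ∈ bs →
      LStep self (.recvT p bs) (.recv p self a) T
  | mu {x T ℓ T'} : LStep self (LTn.subst x (.mu x T) T) ℓ T' →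
      LStep self (.mu x T) ℓ T'

/-- Multi-step relation of the local type LTS. -/
inductive LSteps {P A : Type} (self : P) :
    LTn P A → List (Act P A) → LTn P A → Prop
  | nil {T} : LSteps self T [] T
  | cons {T T' T'' ℓ ℓs} : LStep self T ℓ T' → LSteps self T' ℓs T'' →
      LSteps self T (ℓ :: ℓs) T''

/-- The traces of a local type. -/
def LTraces {P A : Type} (self : P) (T : LTn P A) : Set (List (Act P A)) :=
  {φ | ∃ T', LSteps self T φ T'}

/-- An abstract finite-state machine (automaton over actions). -/
structure Machine (σ P A : Type) where
  init : σ
  delta : σ → Act P A → σ → Prop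

inductive MSteps {σ P A : Type} (M : Machine σ P A) :
    σ → List (Act P A) → σ → Prop
  | nil {s} : MSteps M s [] s
  | cons {s s' s'' ℓ ℓs} : M.delta s ℓ s' → MSteps M s' ℓs s'' →
      MSteps M s (ℓ :: ℓs) s''

/-- The (finite action) traces of a machine. -/
def MTraces {σ P A : Type} (M : Machine σ P A) : Set (List (Act P A)) :=
  {φ | ∃ s, MSteps M M.init φ s}

/-- A(T): the CFSM translated from a local type T, whose states are the
(unfoldings of) subterm occurrences of T and whose transitions are given
by the local type LTS. -/
def AT {P A : Type} (self : P) (T : LTn P A) : Machine (LTn P A) P A :=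
  ⟨T, LStep self⟩

/-- A concrete CFSM for a single participant: states are natural numbers,
transitions a finite list. -/
structure FSM (P A : Type) where
  init : ℕ
  trans : List (ℕ × Act P A × ℕ)

namespace FSM
variable {P A : Type}

def toMachine (M : FSM P A) : Machine ℕ P A :=
  ⟨M.init, fun s ℓ s' => (s, ℓ, s') ∈ M.trans⟩

def states (M : FSM P A) : List ℕ :=
  M.init :: M.trans.foldr (fun t acc => t.1 :: t.2.2 :: acc) []

/-- The outgoing transitions of state `q`. -/
def out (M : FSM P A) (q : ℕ) : List (Act P A × ℕ) :=
  M.trans.filterMap (fun t => if t.1 = q then some t.2 else none)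

/-- Machine `M` belongs to participant `p`. -/
def Proper (M : FSM P A) (p : P) : Prop :=
  ∀ t ∈ M.trans, Act.subj t.2.1 = p

def Deterministic (M : FSM P A) : Prop :=
  ∀ q ℓ q1 q2, (q, ℓ, q1) ∈ M.trans → (q, ℓ, q2) ∈ M.trans → q1 = q2

def DirectedM (M : FSM P A) : Prop :=
  ∀ q ℓ1 q1 ℓ2 q2, (q, ℓ1, q1) ∈ M.trans → (q, ℓ2, q2) ∈ M.trans →
    Act.partner ℓ1 = Act.partner ℓ2

def NoMixed (M : FSM P A) : Prop :=
  ∀ q ℓ1 q1 ℓ2 q2, (q, ℓ1, q1) ∈ M.trans → (q, ℓ2, q2) ∈ M.trans →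
    Act.isSend ℓ1 = Act.isSend ℓ2

/-- A basic CFSM: deterministic, directed, no mixed states. -/
def Basic (M : FSM P A) (p : P) : Prop :=
  Proper M p ∧ Deterministic M ∧ DirectedM M ∧ NoMixed M

end FSM

/-- T(M): the translation of a basic CFSM into a local type. Sending states
become selections, receiving states branchings, final states `end`, and
back-edges to already visited states become recursion variables (each state
`q` names a recursion binder μt_q). The fuel (bounded by the number of
states) guarantees termination. -/
def TMgo {P A : Type} (M : FSM P A) : ℕ → List ℕ → ℕ → LTn P A
  | 0, _, _ => .ende
  | fuel + 1, visited, q =>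
    match M.out q with
    | [] => .ende
    | (ℓ, _) :: _ =>
      let bs := (M.out q).map (fun o =>
        (Act.msg o.1,
          if o.2 ∈ q :: visited then LTn.var o.2
          else TMgo M fuel (q :: visited) o.2))
      if Act.isSend ℓ then .mu q (.sendT (Act.partner ℓ) bs)
      else .mu q (.recvT (Act.partner ℓ) bs)

def TM {P A : Type} (M : FSM P A) : LTn P A :=
  TMgo M (M.states.length + 1) [] M.init

/-!
`M` and `T(M)` are related by a bisimulation. The subterm of `T(M)` built at a state `q` after
visiting the distinct states `C` is open, with free recursion variables in `C`; substituting
for each `v ∈ C` the closed type built at `v` gives a closed type `M.typeAt C q`. Since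
substitutions of closed types for distinct variables commute, unfolding `μt_q` in
`M.typeAt C q` yields the selection or branching over the closed types of the successors of
`q`. Directedness and the absence of mixed states make every transition of `q` carry the
direction and partner of that selection or branching, so it is matched by the branch with the
same message.
-/

namespace Act
variable {P A : Type}

def byDir : Bool → P → P → A → Act P A
  | true, self, r, a => send self r a
  | false, self, r, a => recv r self a

theorem eq_byDir (ℓ : Act P A) : ℓ = byDir ℓ.isSend ℓ.subj ℓ.partner ℓ.msg := by
  cases ℓ <;> rfl

end Act

namespace LTn
variable {P A : Type}

def choice : Bool → P → List (A × LTn P A) → LTn P A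
  | true => sendT
  | false => recvT

mutual
  def NotFree (x : ℕ) : LTn P A → Prop
    | .ende => True
    | .var y => y ≠ x
    | .mu y T => y = x ∨ NotFree x T
    | .recvT _ bs => NotFreeL x bs
    | .sendT _ bs => NotFreeL x bs
  def NotFreeL (x : ℕ) : List (A × LTn P A) → Prop
    | [] => True
    | (_, T) :: bs => NotFree x T ∧ NotFreeL x bs
end

def Closed (T : LTn P A) : Prop := ∀ x, NotFree x T

theorem notFreeL_iff (x : ℕ) :
    ∀ bs : List (A × LTn P A), NotFreeL x bs ↔ ∀ b ∈ bs, NotFree x b.2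
  | [] => by simp [NotFreeL]
  | (a, T) :: bs => by simp [NotFreeL, notFreeL_iff x bs]

theorem notFree_choice (x : ℕ) (b : Bool) (r : P) (bs : List (A × LTn P A)) :
    NotFree x (choice b r bs) ↔ NotFreeL x bs := by
  cases b <;> simp [choice, NotFree]

theorem substL_eq_map (x : ℕ) (u : LTn P A) :
    ∀ bs, substL x u bs = bs.map fun b => (b.1, subst x u b.2)
  | [] => rfl
  | (a, T) :: bs => by simp [substL, substL_eq_map x u bs]

theorem subst_choice (x : ℕ) (u : LTn P A) (b : Bool) (r : P) (bs : List (A × LTn P A)) :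
    subst x u (choice b r bs) = choice b r (bs.map fun e => (e.1, subst x u e.2)) := by
  cases b <;> simp [choice, subst, substL_eq_map]

mutual
  theorem subst_of_notFree (x : ℕ) (u : LTn P A) : ∀ T, NotFree x T → subst x u T = T
    | .ende, _ => rfl
    | .var y, h => by simp_all [NotFree, subst]
    | .mu y T, h => by
        by_cases hyx : y = x
        · simp [subst, hyx]
        · simp only [NotFree, hyx, false_or] at h
          simp [subst, hyx, subst_of_notFree x u T h]
    | .recvT r bs, h => by simp [subst, substL_of_notFreeL x u bs h]
    | .sendT r bs, h => by simp [subst, substL_of_notFreeL x u bs h]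
  theorem substL_of_notFreeL (x : ℕ) (u : LTn P A) : ∀ bs, NotFreeL x bs → substL x u bs = bs
    | [], _ => rfl
    | (a, T) :: bs, h => by
        simp [substL, subst_of_notFree x u T h.1, substL_of_notFreeL x u bs h.2]
end

mutual
  theorem notFree_subst {x v : ℕ} {u : LTn P A} (hu : NotFree x u) :
      ∀ T, x = v ∨ NotFree x T → NotFree x (subst v u T)
    | .ende, _ => trivial
    | .var y, h => by
        by_cases hyv : y = v
        · simpa [subst, hyv] using hu
        · simp only [subst, hyv, if_false, NotFree]
          rcases h with h | h
          · exact h ▸ hyv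
          · exact h
    | .mu y T, h => by
        by_cases hyv : y = v
        · simp only [subst, hyv, if_true]
          rcases h with rfl | h
          · simp [NotFree]
          · rwa [hyv] at h
        · simp only [subst, hyv, if_false, NotFree]
          rcases h with h | h | h
          · exact Or.inr (notFree_subst hu T (Or.inl h))
          · exact Or.inl h
          · exact Or.inr (notFree_subst hu T (Or.inr h))
    | .recvT r bs, h => notFreeL_substL hu bs h
    | .sendT r bs, h => notFreeL_substL hu bs h
  theorem notFreeL_substL {x v : ℕ} {u : LTn P A} (hu : NotFree x u) :
      ∀ bs, x = v ∨ NotFreeL x bs → NotFreeL x (substL v u bs)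
    | [], _ => trivial
    | (_, T) :: bs, h =>
        ⟨notFree_subst hu T (h.imp_right And.left), notFreeL_substL hu bs (h.imp_right And.right)⟩
end

mutual
  theorem subst_comm {x y : ℕ} {X Y : LTn P A} (hxy : x ≠ y) (hX : NotFree y X)
      (hY : NotFree x Y) : ∀ T, subst y Y (subst x X T) = subst x X (subst y Y T)
    | .ende => rfl
    | .var z => by
        by_cases hzx : z = x
        · simp [subst, hzx, hxy, subst_of_notFree y Y X hX]
        · by_cases hzy : z = y
          · simp [subst, hzy, Ne.symm hxy, subst_of_notFree x X Y hY]
          · simp [subst, hzx, hzy]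
    | .mu z T => by
        by_cases hzx : z = x
        · simp [subst, hzx, hxy]
        · by_cases hzy : z = y
          · simp [subst, hzy, Ne.symm hxy]
          · simp [subst, hzx, hzy, subst_comm hxy hX hY T]
    | .recvT r bs => by simp [subst, substL_comm hxy hX hY bs]
    | .sendT r bs => by simp [subst, substL_comm hxy hX hY bs]
  theorem substL_comm {x y : ℕ} {X Y : LTn P A} (hxy : x ≠ y) (hX : NotFree y X)
      (hY : NotFree x Y) : ∀ bs, substL y Y (substL x X bs) = substL x X (substL y Y bs)
    | [] => rfl
    | (a, T) :: bs => by simp [substL, subst_comm hxy hX hY T, substL_comm hxy hX hY bs]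
end

end LTn

section LocalTypeLTS
variable {P A : Type}

theorem LStep.mu_iff {self : P} {x : ℕ} {T T' : LTn P A} {ℓ : Act P A} :
    LStep self (.mu x T) ℓ T' ↔ LStep self (LTn.subst x (.mu x T) T) ℓ T' :=
  ⟨fun | .mu h => h, .mu⟩

theorem LStep.choice_iff {self r : P} {b : Bool} {bs : List (A × LTn P A)} {ℓ : Act P A}
    {T : LTn P A} :
    LStep self (LTn.choice b r bs) ℓ T ↔ ∃ a, (a, T) ∈ bs ∧ ℓ = Act.byDir b self r a := by
  cases b
  · exact ⟨fun | .bra h => ⟨_, h, rfl⟩, fun ⟨_, h, hℓ⟩ => hℓ ▸ .bra h⟩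
  · exact ⟨fun | .sel h => ⟨_, h, rfl⟩, fun ⟨_, h, hℓ⟩ => hℓ ▸ .sel h⟩

theorem LStep.not_ende {self : P} {ℓ : Act P A} {T : LTn P A} : ¬ LStep self .ende ℓ T :=
  nofun

theorem msteps_AT_iff {self : P} {T T₀ T₁ : LTn P A} {φ : List (Act P A)} :
    MSteps (AT self T) T₀ φ T₁ ↔ LSteps self T₀ φ T₁ := by
  constructor
  · intro h
    induction h with
    | nil => exact .nil
    | cons h _ ih => exact .cons h ih
  · intro h
    induction h with
    | nil => exact .nil
    | cons h _ ih => exact .cons h ih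

theorem LTraces_eq_MTraces_AT (self : P) (T : LTn P A) :
    LTraces self T = MTraces (AT self T) := by
  ext φ
  exact exists_congr fun _ => msteps_AT_iff.symm

end LocalTypeLTS

section Simulation
variable {σ τ P A : Type} {M : Machine σ P A} {N : Machine τ P A} {R : σ → τ → Prop}

theorem MSteps.exists_of_simulation
    (hR : ∀ s t ℓ s', R s t → M.delta s ℓ s' → ∃ t', N.delta t ℓ t' ∧ R s' t')
    {s s' : σ} {t : τ} {φ : List (Act P A)} (h : MSteps M s φ s') (hst : R s t) :
    ∃ t', MSteps N t φ t' ∧ R s' t' := by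
  induction h generalizing t with
  | nil => exact ⟨t, .nil, hst⟩
  | cons hstep _ ih =>
    obtain ⟨t₁, ht₁, hR₁⟩ := hR _ _ _ _ hst hstep
    obtain ⟨t', hsteps, hR'⟩ := ih hR₁
    exact ⟨t', .cons ht₁ hsteps, hR'⟩

theorem MTraces_subset_of_simulation
    (hR : ∀ s t ℓ s', R s t → M.delta s ℓ s' → ∃ t', N.delta t ℓ t' ∧ R s' t')
    (hinit : R M.init N.init) : MTraces M ⊆ MTraces N := fun _ ⟨_, h⟩ =>
  let ⟨t', ht', _⟩ := h.exists_of_simulation hR hinit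
  ⟨t', ht'⟩

end Simulation

namespace FSM
variable {P A : Type} (M : FSM P A)

theorem mem_out {q q' : ℕ} {ℓ : Act P A} : (ℓ, q') ∈ M.out q ↔ (q, ℓ, q') ∈ M.trans := by
  simp only [out, List.mem_filterMap]
  constructor
  · rintro ⟨⟨q₀, ℓ₀, q₀'⟩, ht, h⟩
    split_ifs at h with hq
    cases h
    exact hq ▸ ht
  · exact fun h => ⟨(q, ℓ, q'), h, by simp⟩

theorem target_mem_states {q q' : ℕ} {ℓ : Act P A} (h : (q, ℓ, q') ∈ M.trans) :
    q' ∈ M.states := by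
  suffices ∀ L : List (ℕ × Act P A × ℕ), (q, ℓ, q') ∈ L →
      q' ∈ L.foldr (fun t acc => t.1 :: t.2.2 :: acc) [] from
    List.mem_cons_of_mem _ (this _ h)
  intro L hL
  induction L with
  | nil => simp at hL
  | cons t L ih =>
    rcases List.mem_cons.1 hL with rfl | hL
    · simp
    · simp [ih hL]

variable {M} in
theorem Basic.eq_byDir {p : P} (hB : M.Basic p) {q q' r : ℕ} {ℓ ℓ₀ : Act P A}
    (h : (q, ℓ, q') ∈ M.trans) (h₀ : (q, ℓ₀, r) ∈ M.trans) :
    ℓ = Act.byDir ℓ₀.isSend p ℓ₀.partner ℓ.msg := by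
  obtain ⟨hProper, -, hDirected, hNoMixed⟩ := hB
  conv_lhs => rw [ℓ.eq_byDir]
  rw [hProper _ h, hDirected _ _ _ _ _ h h₀, hNoMixed _ _ _ _ _ h h₀]

theorem TMgo_succ_of_out_eq_nil {q : ℕ} (f : ℕ) (V : List ℕ) (h : M.out q = []) :
    TMgo M (f + 1) V q = .ende := by
  simp only [TMgo, h]

theorem TMgo_succ_of_out_eq_cons {q r : ℕ} {ℓ₀ : Act P A} {rest : List (Act P A × ℕ)}
    (f : ℕ) (V : List ℕ) (h : M.out q = (ℓ₀, r) :: rest) :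
    TMgo M (f + 1) V q = .mu q (.choice ℓ₀.isSend ℓ₀.partner ((M.out q).map fun o =>
      (o.1.msg, if o.2 ∈ q :: V then .var o.2 else TMgo M f (q :: V) o.2))) := by
  simp only [TMgo, h]
  cases ℓ₀.isSend <;> rfl

theorem notFree_TMgo {x : ℕ} : ∀ (f : ℕ) (V : List ℕ) (q : ℕ), x ∉ V → (TMgo M f V q).NotFree x
  | 0, _, _, _ => trivial
  | f + 1, V, q, hx => by
    rcases h : M.out q with _ | ⟨⟨ℓ₀, r⟩, rest⟩
    · rw [TMgo_succ_of_out_eq_nil M f V h]; trivial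
    rw [TMgo_succ_of_out_eq_cons M f V h]
    by_cases hxq : x = q
    · exact Or.inl hxq.symm
    have hx' : x ∉ q :: V := by simp [hxq, hx]
    refine Or.inr ((LTn.notFree_choice _ _ _ _).2 ((LTn.notFreeL_iff _ _).2 ?_))
    simp only [List.mem_map]
    rintro _ ⟨o, -, rfl⟩
    split_ifs with ho
    · exact fun hc => hx' (hc ▸ ho)
    · exact notFree_TMgo f (q :: V) o.2 hx'

/-- The subterm of `TM M` built at `q` after visiting the states `V` (most recent first). -/
def openType (V : List ℕ) (q : ℕ) : LTn P A :=
  TMgo M (M.states.length + 1 - V.length) V q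

def branchType (V : List ℕ) (q : ℕ) : LTn P A :=
  if q ∈ V then .var q else M.openType V q

/-- Substitutes, innermost binder first, for each `v ∈ C` the closed type built at `v`. -/
def closeAlong : List ℕ → LTn P A → LTn P A
  | [], T => T
  | v :: V, T => closeAlong V (LTn.subst v (closeAlong V (M.openType V v)) T)

def typeAt (C : List ℕ) (q : ℕ) : LTn P A := M.closeAlong C (M.openType C q)

theorem closeAlong_cons (v : ℕ) (V : List ℕ) (T : LTn P A) :
    M.closeAlong (v :: V) T = M.closeAlong V (LTn.subst v (M.typeAt V v) T) := rfl

theorem notFree_closeAlong {x : ℕ} :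
    ∀ (C : List ℕ) (T : LTn P A), x ∈ C ∨ T.NotFree x → (M.closeAlong C T).NotFree x
  | [], _, h => h.resolve_left List.not_mem_nil
  | v :: V, T, h => by
    refine notFree_closeAlong V _ (or_iff_not_imp_left.2 fun hxV => ?_)
    have hclosed : (M.closeAlong V (M.openType V v)).NotFree x :=
      notFree_closeAlong V _ (Or.inr (M.notFree_TMgo _ V v hxV))
    refine LTn.notFree_subst hclosed T ?_
    rcases h with h | h
    · exact Or.inl ((List.mem_cons.1 h).resolve_right hxV)
    · exact Or.inr h

theorem typeAt_closed (C : List ℕ) (q : ℕ) : (M.typeAt C q).Closed := fun _ =>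
  M.notFree_closeAlong C _ (or_iff_not_imp_left.2 (M.notFree_TMgo _ C q))

theorem closeAlong_of_closed {T : LTn P A} (hT : T.Closed) : ∀ C, M.closeAlong C T = T
  | [] => rfl
  | v :: V => by
    simp only [closeAlong, LTn.subst_of_notFree _ _ T (hT v), closeAlong_of_closed hT V]

theorem closeAlong_mu {q : ℕ} {T : LTn P A} : ∀ {C : List ℕ}, q ∉ C →
    M.closeAlong C (.mu q T) = .mu q (M.closeAlong C T)
  | [], _ => rfl
  | v :: V, hq => by
    have hqv : q ≠ v := fun h => hq (h ▸ List.mem_cons_self)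
    simp only [closeAlong, LTn.subst, hqv, if_false]
    exact closeAlong_mu (fun h => hq (List.mem_cons_of_mem _ h))

theorem closeAlong_choice (b : Bool) (r : P) :
    ∀ (C : List ℕ) (bs : List (A × LTn P A)),
      M.closeAlong C (.choice b r bs) = .choice b r (bs.map fun e => (e.1, M.closeAlong C e.2))
  | [], bs => by simp [closeAlong]
  | v :: V, bs => by
    simp only [closeAlong, LTn.subst_choice, closeAlong_choice b r V, List.map_map]
    rfl

theorem closeAlong_subst {q : ℕ} {X : LTn P A} (hX : X.Closed) :
    ∀ {C : List ℕ} (T : LTn P A), q ∉ C →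
      M.closeAlong C (LTn.subst q X T) = LTn.subst q X (M.closeAlong C T)
  | [], _, _ => rfl
  | v :: V, T, hq => by
    have hqv : q ≠ v := fun h => hq (h ▸ List.mem_cons_self)
    rw [closeAlong_cons, closeAlong_cons, LTn.subst_comm hqv (hX v) (M.typeAt_closed V v q)]
    exact closeAlong_subst hX _ (fun h => hq (List.mem_cons_of_mem _ h))

theorem closeAlong_var {s : ℕ} : ∀ {C : List ℕ}, s ∈ C →
    ∃ C', s :: C' <:+ C ∧ M.closeAlong C (.var s) = M.typeAt C' s
  | v :: V, hs => by
    by_cases hsv : s = v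
    · subst hsv
      refine ⟨V, List.suffix_refl _, ?_⟩
      simp only [closeAlong, LTn.subst, if_true]
      exact M.closeAlong_of_closed (M.typeAt_closed V s) V
    · obtain ⟨C', hsuf, hC'⟩ := closeAlong_var ((List.mem_cons.1 hs).resolve_left hsv)
      refine ⟨C', hsuf.trans (List.suffix_cons v V), ?_⟩
      simpa only [closeAlong, LTn.subst, hsv, if_false] using hC'

variable {M}

theorem openType_eq_TMgo_succ {q : ℕ} {C : List ℕ} (hnd : (q :: C).Nodup)
    (hsub : q :: C ⊆ M.states) :
    M.openType C q = TMgo M (M.states.length + 1 - (q :: C).length + 1) C q := by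
  have hlen : (q :: C).length ≤ M.states.length := (List.subperm_of_subset hnd hsub).length_le
  rw [openType]
  congr 1
  simp only [List.length_cons] at hlen ⊢
  omega

theorem lstep_typeAt_iff_of_out_eq_cons {self : P} {q r : ℕ} {C : List ℕ} {ℓ₀ : Act P A}
    {rest : List (Act P A × ℕ)} {ℓ : Act P A} {T : LTn P A} (hnd : (q :: C).Nodup)
    (hsub : q :: C ⊆ M.states) (h : M.out q = (ℓ₀, r) :: rest) :
    LStep self (M.typeAt C q) ℓ T ↔ LStep self (.choice ℓ₀.isSend ℓ₀.partner ((M.out q).map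
      fun o => (o.1.msg, M.closeAlong (q :: C) (M.branchType (q :: C) o.2)))) ℓ T := by
  set B : LTn P A := .choice ℓ₀.isSend ℓ₀.partner ((M.out q).map fun o =>
    (o.1.msg, M.branchType (q :: C) o.2))
  have hq : q ∉ C := (List.nodup_cons.1 hnd).1
  have hmu : M.typeAt C q = .mu q (M.closeAlong C B) := by
    rw [typeAt, openType_eq_TMgo_succ hnd hsub, TMgo_succ_of_out_eq_cons M _ C h,
      closeAlong_mu M hq]
    rfl
  rw [hmu, LStep.mu_iff, ← hmu, ← closeAlong_subst M (M.typeAt_closed C q) B hq,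
    ← closeAlong_cons, closeAlong_choice, List.map_map]
  rfl

theorem lstep_typeAt_iff {p : P} (hB : M.Basic p) {q : ℕ} {C : List ℕ} {ℓ : Act P A}
    {T : LTn P A} (hnd : (q :: C).Nodup) (hsub : q :: C ⊆ M.states) :
    LStep p (M.typeAt C q) ℓ T ↔
      ∃ q', (q, ℓ, q') ∈ M.trans ∧ T = M.closeAlong (q :: C) (M.branchType (q :: C) q') := by
  rcases h : M.out q with _ | ⟨⟨ℓ₀, r⟩, rest⟩
  · have hende : M.typeAt C q = .ende := by
      rw [typeAt, openType_eq_TMgo_succ hnd hsub, TMgo_succ_of_out_eq_nil M _ C h]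
      exact M.closeAlong_of_closed (T := .ende) (fun _ => trivial) C
    rw [hende]
    refine ⟨fun h => absurd h LStep.not_ende, fun ⟨q', ht, _⟩ => ?_⟩
    simpa [h] using (M.mem_out).2 ht
  have h₀ : (q, ℓ₀, r) ∈ M.trans := (M.mem_out).1 (h ▸ List.mem_cons_self)
  rw [lstep_typeAt_iff_of_out_eq_cons hnd hsub h, LStep.choice_iff]
  constructor
  · rintro ⟨a, hmem, rfl⟩
    obtain ⟨⟨ℓ', q'⟩, ho, heq⟩ := List.mem_map.1 hmem
    obtain ⟨rfl, rfl⟩ := Prod.mk.inj heq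
    have ht := (M.mem_out).1 ho
    exact ⟨q', hB.eq_byDir ht h₀ ▸ ht, rfl⟩
  · rintro ⟨q', ht, rfl⟩
    exact ⟨ℓ.msg, List.mem_map.2 ⟨(ℓ, q'), (M.mem_out).2 ht, rfl⟩, hB.eq_byDir ht h₀⟩

variable (M) in
def Corresponds (q : ℕ) (T : LTn P A) : Prop :=
  ∃ C, (q :: C).Nodup ∧ q :: C ⊆ M.states ∧ T = M.typeAt C q

theorem corresponds_closeAlong_branchType {q q' : ℕ} {C : List ℕ} (hnd : (q :: C).Nodup)
    (hsub : q :: C ⊆ M.states) (hq' : q' ∈ M.states) :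
    M.Corresponds q' (M.closeAlong (q :: C) (M.branchType (q :: C) q')) := by
  unfold branchType
  split_ifs with hmem
  · obtain ⟨C', hsuf, heq⟩ := M.closeAlong_var hmem
    exact ⟨C', hnd.sublist hsuf.sublist, List.Subset.trans hsuf.subset hsub, heq⟩
  · exact ⟨q :: C, List.nodup_cons.2 ⟨hmem, hnd⟩, List.cons_subset.2 ⟨hq', hsub⟩, rfl⟩

theorem Corresponds.exists_lstep {p : P} (hB : M.Basic p) {q q' : ℕ} {ℓ : Act P A}
    {T : LTn P A} (hR : M.Corresponds q T) (ht : (q, ℓ, q') ∈ M.trans) :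
    ∃ T', LStep p T ℓ T' ∧ M.Corresponds q' T' := by
  obtain ⟨C, hnd, hsub, rfl⟩ := hR
  exact ⟨_, (lstep_typeAt_iff hB hnd hsub).2 ⟨q', ht, rfl⟩,
    corresponds_closeAlong_branchType hnd hsub (M.target_mem_states ht)⟩

theorem Corresponds.exists_trans {p : P} (hB : M.Basic p) {q : ℕ} {ℓ : Act P A}
    {T T' : LTn P A} (hR : M.Corresponds q T) (hstep : LStep p T ℓ T') :
    ∃ q', (q, ℓ, q') ∈ M.trans ∧ M.Corresponds q' T' := by
  obtain ⟨C, hnd, hsub, rfl⟩ := hR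
  obtain ⟨q', ht, rfl⟩ := (lstep_typeAt_iff hB hnd hsub).1 hstep
  exact ⟨q', ht, corresponds_closeAlong_branchType hnd hsub (M.target_mem_states ht)⟩

theorem MTraces_toMachine_eq {p : P} (hB : M.Basic p) :
    MTraces M.toMachine = MTraces (AT p (TM M)) := by
  have hinit : M.Corresponds M.init (TM M) :=
    ⟨[], List.nodup_singleton _, List.cons_subset.2 ⟨List.mem_cons_self, List.nil_subset _⟩, rfl⟩
  exact Set.Subset.antisymm
    (MTraces_subset_of_simulation (fun _ _ _ _ hR ht => hR.exists_lstep hB ht) hinit)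
    (MTraces_subset_of_simulation (R := flip M.Corresponds)
      (fun _ _ _ _ hR hstep => hR.exists_trans hB hstep) hinit)

end FSM

/-- the translations between basic CFSMs and local types
preserve the trace semantics: a basic CFSM M (of participant p) is trace
equivalent to the automaton A(T(M)) of its induced local type, and any
local type T is trace equivalent to its automaton A(T). -/
theorem translations_preserve_traces {P A : Type} (p : P) (M : FSM P A)
    (hB : FSM.Basic M p) :
    MTraces (FSM.toMachine M) = MTraces (AT p (TM M)) ∧
    (∀ (self : P) (T : LTn P A), LTraces self T = MTraces (AT self T)) :=
  ⟨M.MTraces_toMachine_eq hB, LTraces_eq_MTraces_AT⟩
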